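/- (a) Gy(n) is generated by G_0(n) together with y_{n−1}; (b) the conjugate subgroup y_{n−1}^{−1} G_0(n) y_{n−1} is a proper subgroup of G_0(n); and (c) the natural homomorphism from the HNN extension ⟨G_0(n), t | t^{−1} h t = y_{n−1}^{−1} h y_{n−1} (h ∈ G_0(n))⟩ to Gy(n), restricting to the identity on G_0(n) and sending the stable letter t to y_{n−1}, is an isomorphism. In other words, Gy(n) has a strictly ascending HNN decomposition Gy(n) ≅ (G_0(n)) *_{y_{n−1}}. -/

import Mathlib

namespace LM

/-- Group structure on the self-homeomorphisms of a space, with the convention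
`(f * g) ξ = f (g ξ)`.  A product `f₁ f₂ ⋯ f_k` in the paper's convention
(`fg = g ∘ f`) corresponds to `f_k * ⋯ * f₂ * f₁` here. -/
instance homeoGroup {X : Type*} [TopologicalSpace X] : Group (X ≃ₜ X) where
  mul f g := g.trans f
  one := Homeomorph.refl X
  inv := Homeomorph.symm
  mul_assoc _ _ _ := Homeomorph.ext fun _ => rfl
  one_mul _ := Homeomorph.ext fun _ => rfl
  mul_one _ := Homeomorph.ext fun _ => rfl
  inv_mul_cancel f := Homeomorph.ext fun x => f.symm_apply_apply x

/-- The `n`-adic Cantor set `{0, …, n-1}^ℕ` with the product topology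
(`Fin n` being discrete). -/
abbrev C (n : ℕ) : Type := ℕ → Fin n

/-- The group of self-homeomorphisms of the `n`-adic Cantor set. -/
abbrev Γ (n : ℕ) : Type := C n ≃ₜ C n

/-- Prepend a letter to an infinite sequence. -/
def cons {n : ℕ} (a : Fin n) (s : C n) : C n
  | 0 => a
  | i + 1 => s i

/-- Prepend a finite word to an infinite sequence. -/
def wcons {n : ℕ} (w : List (Fin n)) (s : C n) : C n := w.foldr cons s

/-- The sum of the letters of a finite word. -/
def dsum {n : ℕ} (w : List (Fin n)) : ℕ := (w.map Fin.val).sum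

/-- `f` acts as `core` after the prefix `α` and fixes every sequence not beginning
with `α`. -/
def IsPrefixMap {n : ℕ} (α : List (Fin n)) (core : Γ n) (f : Γ n) : Prop :=
  (∀ η, f (wcons α η) = wcons α (core η)) ∧
  (∀ ξ : C n, (∀ η, ξ ≠ wcons α η) → f ξ = ξ)

/-- The defining equations of the generator `x₀` of the Brown–Thompson group `F(n)`. -/
def IsX0 (n : ℕ) (hn : 2 ≤ n) (f : Γ n) : Prop :=
  (∀ k : Fin n, (k : ℕ) ≤ n - 2 → ∀ η,
    f (cons ⟨0, by omega⟩ (cons k η)) = cons k η) ∧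
  (∀ η, f (cons ⟨0, by omega⟩ (cons ⟨n - 1, by omega⟩ η)) =
    cons ⟨n - 1, by omega⟩ (cons ⟨0, by omega⟩ η)) ∧
  (∀ k : Fin n, 1 ≤ (k : ℕ) → (k : ℕ) ≤ n - 2 → ∀ η,
    f (cons k η) = cons ⟨n - 1, by omega⟩ (cons k η)) ∧
  (∀ η, f (cons ⟨n - 1, by omega⟩ η) =
    cons ⟨n - 1, by omega⟩ (cons ⟨n - 1, by omega⟩ η))

/-- The defining equations of the generator `x_j`, `1 ≤ j ≤ n - 2`. -/
def IsXMid (n : ℕ) (hn : 2 ≤ n) (j : Fin n) (f : Γ n) : Prop :=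
  (∀ k : Fin n, (k : ℕ) < (j : ℕ) → ∀ η, f (cons k η) = cons k η) ∧
  (∀ k m : Fin n, (m : ℕ) = (j : ℕ) + (k : ℕ) → (j : ℕ) + (k : ℕ) ≤ n - 2 → ∀ η,
    f (cons j (cons k η)) = cons m η) ∧
  (∀ k m : Fin n, n - 1 ≤ (j : ℕ) + (k : ℕ) → (m : ℕ) = (j : ℕ) + (k : ℕ) - (n - 1) → ∀ η,
    f (cons j (cons k η)) = cons ⟨n - 1, by omega⟩ (cons m η)) ∧
  (∀ k : Fin n, (j : ℕ) < (k : ℕ) → (k : ℕ) ≤ n - 2 → ∀ η,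
    f (cons k η) = cons ⟨n - 1, by omega⟩ (cons k η)) ∧
  (∀ η, f (cons ⟨n - 1, by omega⟩ η) =
    cons ⟨n - 1, by omega⟩ (cons ⟨n - 1, by omega⟩ η))

/-- The defining equations of the generator `x_{n-1}` (in terms of `x₀`). -/
def IsXLast (n : ℕ) (hn : 2 ≤ n) (x0 f : Γ n) : Prop :=
  (∀ k : Fin n, (k : ℕ) ≤ n - 2 → ∀ η, f (cons k η) = cons k η) ∧
  (∀ η, f (cons ⟨n - 1, by omega⟩ η) = cons ⟨n - 1, by omega⟩ (x0 η))

/-- `x` is the family `x₀, …, x_{n-1}` of generators of the Brown–Thompson group. -/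
def IsXFamily (n : ℕ) (hn : 2 ≤ n) (x : Fin n → Γ n) : Prop :=
  IsX0 n hn (x ⟨0, by omega⟩) ∧
  (∀ j : Fin n, 1 ≤ (j : ℕ) → (j : ℕ) ≤ n - 2 → IsXMid n hn j (x j)) ∧
  IsXLast n hn (x ⟨0, by omega⟩) (x ⟨n - 1, by omega⟩)

/-- The defining (co)recursive equations of the map `y`. -/
def IsY (n : ℕ) (hn : 2 ≤ n) (f : Γ n) : Prop :=
  (∀ ζ, f (cons ⟨0, by omega⟩ (cons ⟨0, by omega⟩ ζ)) = cons ⟨0, by omega⟩ (f ζ)) ∧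
  (∀ k : Fin n, 1 ≤ (k : ℕ) → (k : ℕ) ≤ n - 2 → ∀ ζ,
    f (cons ⟨0, by omega⟩ (cons k ζ)) = cons k ζ) ∧
  (∀ k : Fin n, 1 ≤ (k : ℕ) → (k : ℕ) ≤ n - 2 → ∀ ζ,
    f (cons k ζ) = cons ⟨n - 1, by omega⟩ (cons k ζ)) ∧
  (∀ ζ, f (cons ⟨0, by omega⟩ (cons ⟨n - 1, by omega⟩ ζ)) =
    cons ⟨n - 1, by omega⟩ (cons ⟨0, by omega⟩ (f⁻¹ ζ))) ∧
  (∀ ζ, f (cons ⟨n - 1, by omega⟩ ζ) =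
    cons ⟨n - 1, by omega⟩ (cons ⟨n - 1, by omega⟩ (f ζ)))

end LM

/-!
Conjugation by `y_{n-1}` maps every generator of `G₀(n)` back into `G₀(n)`; each such relation
is an identity of homeomorphisms, checked on finitely many cones of `C n` from the defining
equations. Identifying `C n` with `[0, 1]`, every element of `G₀(n)` is affine near
`1 = (n-1)^∞`, i.e. replaces a prefix `(n-1)^k` by `(n-1)^l` there. Since `y_{n-1}` sends
`(n-1)^(m+1) 0^∞` to `(n-1)^(2m+1) 0^∞`, no positive power of `y_{n-1}` and not
`y_{n-1}⁻¹ x₀ y_{n-1}` is affine near `1`. So conjugation by `y_{n-1}` embeds `G₀(n)` properly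
into itself, and as every element of an ascending HNN extension has the form `t⁻ᵐ g tᵏ`, the
extension maps injectively onto `⟨G₀(n), y_{n-1}⟩` as soon as no positive power of `y_{n-1}`
lies in `G₀(n)`.
-/

lemma conj_eq_of_mul_conj_eq {G : Type*} [Group G] {t a s : G} (h : t * (s⁻¹ * a * s) = a * t) :
    t * a * t⁻¹ = (t * s * t⁻¹) * a * (t * s * t⁻¹)⁻¹ := by
  have h' : s⁻¹ * a * s = t⁻¹ * a * t := by rw [mul_assoc t⁻¹, ← h]; group
  calc t * a * t⁻¹ = t * s * (s⁻¹ * a * s) * s⁻¹ * t⁻¹ := by group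
    _ = _ := by rw [h']; group

namespace HNNExtension

variable {G : Type*} [Group G] {B : Subgroup G} {φ : (⊤ : Subgroup G) ≃* B}

lemma exists_t_pow_mul_of (d : ℕ) (g : G) :
    ∃ g', (t : HNNExtension G ⊤ B φ) ^ d * of g = of g' * t ^ d := by
  induction d generalizing g with
  | zero => exact ⟨g, by simp⟩
  | succ d ih =>
    obtain ⟨g', hg'⟩ := ih (φ ⟨g, trivial⟩)
    refine ⟨g', ?_⟩
    rw [pow_succ, mul_assoc, t_mul_of (⟨g, trivial⟩ : (⊤ : Subgroup G)), ← mul_assoc, hg',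
      mul_assoc]

lemma exists_of_mul_inv_t_pow (d : ℕ) (g : G) :
    ∃ g', of g * ((t : HNNExtension G ⊤ B φ) ^ d)⁻¹ = (t ^ d)⁻¹ * of g' := by
  obtain ⟨g', hg'⟩ := exists_t_pow_mul_of (φ := φ) d g
  exact ⟨g', by rw [eq_inv_mul_iff_mul_eq, ← mul_assoc, hg', mul_inv_cancel_right]⟩

lemma exists_eq_inv_t_pow_mul_of_mul_t_pow (w : HNNExtension G ⊤ B φ) :
    ∃ (m k : ℕ) (g : G), w = (t ^ m)⁻¹ * of g * t ^ k := by
  induction w using induction_on with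
  | of g => exact ⟨0, 0, g, by simp⟩
  | t => exact ⟨0, 1, 1, by simp⟩
  | mul a b ha hb =>
    obtain ⟨m, k, g, rfl⟩ := ha
    obtain ⟨m', k', g', rfl⟩ := hb
    rcases le_total m' k with hle | hle
    · obtain ⟨d, rfl⟩ := Nat.exists_eq_add_of_le hle
      obtain ⟨g'', hg''⟩ := exists_t_pow_mul_of (φ := φ) d g'
      refine ⟨m, d + k', g * g'', ?_⟩
      calc (t ^ m)⁻¹ * of g * t ^ (m' + d) * ((t ^ m')⁻¹ * of g' * t ^ k')
          = (t ^ m)⁻¹ * of g * (t ^ d * of g') * t ^ k' := by rw [pow_add]; group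
        _ = _ := by rw [hg'', map_mul, pow_add]; group
    · obtain ⟨d, rfl⟩ := Nat.exists_eq_add_of_le hle
      obtain ⟨g'', hg''⟩ := exists_of_mul_inv_t_pow (φ := φ) d g
      refine ⟨m + d, k', g'' * g', ?_⟩
      calc (t ^ m)⁻¹ * of g * t ^ k * ((t ^ (k + d))⁻¹ * of g' * t ^ k')
          = (t ^ m)⁻¹ * (of g * (t ^ d)⁻¹) * of g' * t ^ k' := by rw [pow_add]; group
        _ = _ := by rw [hg'', map_mul, pow_add]; group
  | inv a ha =>
    obtain ⟨m, k, g, rfl⟩ := ha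
    exact ⟨k, m, g⁻¹, by rw [map_inv]; group⟩

end HNNExtension

namespace Subgroup

variable {H : Type*} [Group H] {K : Subgroup H} {t : H}

noncomputable def conjEquivOfMapConjLe (hK : K.map (MulAut.conj t).toMonoidHom ≤ K) :
    (⊤ : Subgroup K) ≃* (K.map (MulAut.conj t).toMonoidHom).subgroupOf K :=
  (Subgroup.topEquiv.trans (K.equivMapOfInjective _ (MulAut.conj t).injective)).trans
    (subgroupOfEquivOfLe hK).symm

lemma coe_conjEquivOfMapConjLe (hK : K.map (MulAut.conj t).toMonoidHom ≤ K)
    (a : (⊤ : Subgroup K)) :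
    ((conjEquivOfMapConjLe hK a : K) : H) = t * a * t⁻¹ :=
  rfl

lemma map_conj_lt (hK : K.map (MulAut.conj t).toMonoidHom ≤ K) {g : H} (hg : g ∈ K)
    (hg' : t⁻¹ * g * t ∉ K) : K.map (MulAut.conj t).toMonoidHom < K := by
  refine hK.lt_of_ne fun h => hg' ?_
  obtain ⟨g', hg'K, rfl⟩ := h.ge hg
  simpa [mul_assoc] using hg'K

theorem exists_hnnExtension_hom_injective (hK : K.map (MulAut.conj t).toMonoidHom ≤ K)
    (ht : ∀ c : ℕ, 0 < c → t ^ c ∉ K) :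
    ∃ (B : Subgroup K) (φ : (⊤ : Subgroup K) ≃* B),
      (∀ a : (⊤ : Subgroup K), ((φ a : K) : H) = t * (a : K) * t⁻¹) ∧
      ∃ f : HNNExtension K ⊤ B φ →* H,
        (∀ h : K, f (HNNExtension.of h) = h) ∧ f HNNExtension.t = t ∧
        Function.Injective f ∧ f.range = closure ((K : Set H) ∪ {t}) := by
  let φ := conjEquivOfMapConjLe hK
  have hφ (a : (⊤ : Subgroup K)) : t * K.subtype a = K.subtype (φ a) * t := by
    simp only [coe_subtype, φ, coe_conjEquivOfMapConjLe, inv_mul_cancel_right]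
  let f := HNNExtension.lift K.subtype t hφ
  have hf (m k : ℕ) (g : K) :
      f ((HNNExtension.t ^ m)⁻¹ * HNNExtension.of g * HNNExtension.t ^ k) =
        (t ^ m)⁻¹ * g * t ^ k := by
    simp only [f, map_mul, map_inv, map_pow, HNNExtension.lift_t, HNNExtension.lift_of,
      coe_subtype]
  refine ⟨_, φ, fun _ => coe_conjEquivOfMapConjLe hK _, f, HNNExtension.lift_of _ _ _,
    HNNExtension.lift_t _ _ _, ?_, ?_⟩
  · refine (injective_iff_map_eq_one f).2 fun w hw => ?_
    obtain ⟨m, k, g, rfl⟩ := HNNExtension.exists_eq_inv_t_pow_mul_of_mul_t_pow w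
    have hg : (g : H) = t ^ m * (t ^ k)⁻¹ := by
      rw [hf] at hw
      rw [eq_mul_inv_iff_mul_eq, eq_comm, ← inv_mul_eq_one, ← mul_assoc, hw]
    rcases le_or_gt k m with hkm | hmk
    · obtain ⟨d, rfl⟩ : ∃ d, m = d + k := ⟨m - k, by omega⟩
      rw [pow_add, mul_inv_cancel_right] at hg
      obtain rfl | hd := d.eq_zero_or_pos
      · obtain rfl : g = 1 := Subtype.ext (by simpa using hg)
        rw [zero_add, map_one, mul_one, inv_mul_cancel]
      · exact absurd (hg ▸ g.2) (ht d hd)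
    · obtain ⟨d, rfl⟩ := Nat.exists_eq_add_of_lt hmk
      have hg' : (g : H)⁻¹ = t ^ (d + 1) := by rw [hg, add_assoc, pow_add]; group
      exact absurd (hg' ▸ inv_mem g.2) (ht (d + 1) d.succ_pos)
  · apply le_antisymm
    · rintro _ ⟨w, rfl⟩
      obtain ⟨m, k, g, rfl⟩ := HNNExtension.exists_eq_inv_t_pow_mul_of_mul_t_pow w
      have hg : (g : H) ∈ closure ((K : Set H) ∪ {t}) := subset_closure (Or.inl g.2)
      have ht' : t ∈ closure ((K : Set H) ∪ {t}) := subset_closure (Or.inr rfl)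
      rw [hf]
      exact mul_mem (mul_mem (inv_mem (pow_mem ht' m)) hg) (pow_mem ht' k)
    · rw [closure_le]
      rintro _ (hg | rfl)
      · exact ⟨HNNExtension.of ⟨_, hg⟩, HNNExtension.lift_of _ _ _ _⟩
      · exact ⟨HNNExtension.t, HNNExtension.lift_t _ _ _⟩

end Subgroup

namespace LM

section Homeomorph

variable {X : Type*} [TopologicalSpace X] (f g : X ≃ₜ X)

@[simp] lemma homeo_mul_apply (x : X) : (f * g) x = f (g x) := rfl

@[simp] lemma homeo_inv_apply_apply (x : X) : f⁻¹ (f x) = x := f.symm_apply_apply x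

@[simp] lemma homeo_apply_inv_apply (x : X) : f (f⁻¹ x) = x := f.apply_symm_apply x

lemma homeo_inv_apply_of_apply_eq {f : X ≃ₜ X} {x y : X} (h : f x = y) : f⁻¹ y = x := by
  rw [← h, homeo_inv_apply_apply]

end Homeomorph

section Sequences

variable {n : ℕ}

@[simp] lemma cons_zero (a : Fin n) (s : C n) : cons a s 0 = a := rfl

@[simp] lemma cons_inj {a b : Fin n} {s t : C n} : cons a s = cons b t ↔ a = b ∧ s = t := by
  refine ⟨fun h => ⟨congrFun h 0, funext fun i => congrFun h (i + 1)⟩, ?_⟩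
  rintro ⟨rfl, rfl⟩
  rfl

lemma exists_eq_cons (ξ : C n) : ∃ a s, ξ = cons a s :=
  ⟨ξ 0, fun i => ξ (i + 1), funext fun i => by cases i <;> rfl⟩

@[simp] lemma wcons_nil (s : C n) : wcons [] s = s := rfl

@[simp] lemma wcons_cons (a : Fin n) (w : List (Fin n)) (s : C n) :
    wcons (a :: w) s = cons a (wcons w s) := rfl

lemma exists_eq_cons₃ (ξ : C n) : ∃ a b c μ, ξ = cons a (cons b (cons c μ)) := by
  obtain ⟨a, s, rfl⟩ := exists_eq_cons ξ
  obtain ⟨b, s, rfl⟩ := exists_eq_cons s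
  obtain ⟨c, s, rfl⟩ := exists_eq_cons s
  exact ⟨a, b, c, s, rfl⟩

lemma exists_eq_cons₄ (ξ : C n) : ∃ a b c d μ, ξ = cons a (cons b (cons c (cons d μ))) := by
  obtain ⟨a, b, c, s, rfl⟩ := exists_eq_cons₃ ξ
  obtain ⟨d, s, rfl⟩ := exists_eq_cons s
  exact ⟨a, b, c, d, s, rfl⟩

lemma eq_const_of_eq_cons {a : Fin n} {s : C n} (h : s = cons a s) : s = Function.const ℕ a := by
  funext i
  induction i with
  | zero => rw [h]; rfl
  | succ i ih => rw [h]; exact ih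

lemma cons_const (a : Fin n) : cons a (Function.const ℕ a) = Function.const ℕ a := by
  funext i
  cases i <;> rfl

lemma iterate_cons_inj {c : Fin n} {η η' : C n} (h : η 0 ≠ c) (h' : η' 0 ≠ c) {a b : ℕ} :
    (cons c)^[a] η = (cons c)^[b] η' ↔ a = b ∧ η = η' := by
  induction a generalizing b with
  | zero =>
    cases b with
    | zero => simp
    | succ b =>
      refine iff_of_false (fun he => h ?_) (by simp)
      rw [show η = _ from he, Function.iterate_succ_apply']
      rfl
  | succ a ih =>
    cases b with
    | zero =>
      refine iff_of_false (fun he => h' ?_) (by simp)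
      rw [show η' = _ from he.symm, Function.iterate_succ_apply']
      rfl
    | succ b => simp [Function.iterate_succ_apply', ih]

end Sequences

section Letters

variable {n : ℕ}

-- Reducible, so that `simp` matches them with the literals in `IsX0`, `IsY`, ….
abbrev first (hn : 2 ≤ n) : Fin n := ⟨0, by omega⟩

abbrev last (hn : 2 ≤ n) : Fin n := ⟨n - 1, by omega⟩

variable (hn : 2 ≤ n)

@[simp] lemma first_ne_last : first hn ≠ last hn := by simp [Fin.ext_iff]; omega

@[simp] lemma last_ne_first : last hn ≠ first hn := (first_ne_last hn).symm

variable {hn}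

@[simp] lemma ne_first_of_one_le {a : Fin n} (h : 1 ≤ (a : ℕ)) : a ≠ first hn := by
  rintro rfl; simp at h

@[simp] lemma ne_last_of_le {a : Fin n} (h : (a : ℕ) ≤ n - 2) : a ≠ last hn := by
  rintro rfl; simp at h; omega

variable (hn)

lemma letter_cases (a : Fin n) :
    a = first hn ∨ (1 ≤ (a : ℕ) ∧ (a : ℕ) ≤ n - 2) ∨ a = last hn := by
  rcases a with ⟨a, ha⟩
  simp only [Fin.ext_iff]
  omega

end Letters

section PrefixMap

variable {n : ℕ} {α β : List (Fin n)} {core f g : Γ n}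

lemma IsPrefixMap.inv (hf : IsPrefixMap α core f) : IsPrefixMap α core⁻¹ f⁻¹ := by
  refine ⟨fun η => homeo_inv_apply_of_apply_eq ?_,
    fun ξ hξ => homeo_inv_apply_of_apply_eq (hf.2 ξ hξ)⟩
  rw [hf.1, homeo_apply_inv_apply]

lemma IsPrefixMap.conj (hf : IsPrefixMap α core f) (hg : ∀ η, g (wcons α η) = wcons β η) :
    IsPrefixMap β core (g * f * g⁻¹) := by
  have hg' η : g⁻¹ (wcons β η) = wcons α η := homeo_inv_apply_of_apply_eq (hg η)
  refine ⟨fun η => by simp only [homeo_mul_apply, hg', hf.1, hg], fun ξ hξ => ?_⟩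
  have hfix : f (g⁻¹ ξ) = g⁻¹ ξ := hf.2 _ fun η h => hξ η (by rw [← hg, ← h, homeo_apply_inv_apply])
  simp only [homeo_mul_apply, hfix, homeo_apply_inv_apply]

lemma IsPrefixMap.apply_cons {a : Fin n} (hf : IsPrefixMap [a] core f) (η : C n) :
    f (cons a η) = cons a (core η) :=
  hf.1 η

end PrefixMap

section Relations

variable {n : ℕ} {hn : 2 ≤ n} {x0 xl xll xj ycore y1 y10 y100 y110 y1110 : Γ n} {j : Fin n}

lemma IsY.inv_eqns (hy : IsY n hn ycore) :
    (∀ ζ, ycore⁻¹ (cons (first hn) ζ) = cons (first hn) (cons (first hn) (ycore⁻¹ ζ))) ∧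
    (∀ k : Fin n, 1 ≤ (k : ℕ) → (k : ℕ) ≤ n - 2 → ∀ ζ,
      ycore⁻¹ (cons k ζ) = cons (first hn) (cons k ζ)) ∧
    (∀ k : Fin n, 1 ≤ (k : ℕ) → (k : ℕ) ≤ n - 2 → ∀ ζ,
      ycore⁻¹ (cons (last hn) (cons k ζ)) = cons k ζ) ∧
    (∀ ζ, ycore⁻¹ (cons (last hn) (cons (first hn) ζ)) =
      cons (first hn) (cons (last hn) (ycore ζ))) ∧
    (∀ ζ, ycore⁻¹ (cons (last hn) (cons (last hn) ζ)) = cons (last hn) (ycore⁻¹ ζ)) := by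
  obtain ⟨h00, h0k, hk, h0l, hl⟩ := hy
  refine ⟨fun ζ => ?_, fun k h1 h2 ζ => ?_, fun k h1 h2 ζ => ?_, fun ζ => ?_, fun ζ => ?_⟩ <;>
    apply homeo_inv_apply_of_apply_eq
  · rw [h00, homeo_apply_inv_apply]
  · exact h0k k h1 h2 ζ
  · exact hk k h1 h2 ζ
  · rw [h0l, homeo_inv_apply_apply]
  · rw [hl, homeo_apply_inv_apply]

lemma IsXLast.isPrefixMap (h : IsXLast n hn x0 xl) : IsPrefixMap [last hn] x0 xl := by
  refine ⟨h.2, fun ξ hξ => ?_⟩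
  obtain ⟨a, s, rfl⟩ := exists_eq_cons ξ
  rcases letter_cases hn a with rfl | ⟨-, ha⟩ | rfl
  · exact h.1 _ (by simp) s
  · exact h.1 _ ha s
  · exact absurd rfl (hξ s)

lemma IsX0.apply_wcons_last (h : IsX0 n hn x0) (w : List (Fin n)) (η : C n) :
    x0 (wcons (last hn :: w) η) = wcons (last hn :: last hn :: w) η :=
  h.2.2.2 _

lemma IsXMid.apply_cons_cons (hj : 1 ≤ (j : ℕ)) (hj' : (j : ℕ) ≤ n - 2) (h : IsXMid n hn j xj)
    (b : Fin n) (μ : C n) :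
    xj (cons j (cons b μ)) = cons (last hn) (cons (first hn) μ) ∨
      ∃ m : Fin n, 1 ≤ (m : ℕ) ∧ (m : ℕ) ≤ n - 2 ∧
        (xj (cons j (cons b μ)) = cons m μ ∨
          xj (cons j (cons b μ)) = cons (last hn) (cons m μ)) := by
  obtain ⟨-, hle, hge, -⟩ := h
  have hb := b.isLt
  rcases lt_trichotomy ((j : ℕ) + b) (n - 1) with hjb | hjb | hjb
  · exact Or.inr ⟨⟨j + b, by omega⟩, by simp; omega, by simp; omega,
      Or.inl (hle b _ rfl (by omega) μ)⟩
  · exact Or.inl (hge b (first hn) hjb.ge (by simp [hjb]) μ)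
  · exact Or.inr ⟨⟨j + b - (n - 1), by omega⟩, by simp; omega, by simp; omega,
      Or.inr (hge b _ hjb.le rfl μ)⟩

/- In the relations below, `1` stands for the letter `n - 1` as in `y1` and `y10`: `y110` acts as
`y` after the prefix `(n-1)(n-1)0`, and `xll` as `x₀` after `(n-1)(n-1)`. Each is checked on the
cones of `C n` given by the first three or four letters. -/

lemma y1_mul_x0 (hx0 : IsX0 n hn x0) (hxl : IsPrefixMap [last hn] x0 xl) (hy : IsY n hn ycore)
    (hy10 : IsPrefixMap [last hn, first hn] ycore y10)
    (hy110 : IsPrefixMap [last hn, last hn, first hn] ycore y110)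
    (hy1 : IsPrefixMap [last hn] ycore y1) :
    y1 * x0 = y10 * y110⁻¹ * xl * x0 * y1 := by
  have hy110i := hy110.inv
  -- `simp` reduces `⟨n - 1, _⟩ = ⟨0, _⟩` to `n - 1 = 0`
  have hn₁ : n - 1 ≠ 0 := by omega
  simp only [IsPrefixMap, IsX0, IsY, wcons_cons, wcons_nil] at hx0 hy hy10 hy110i hxl hy1
  ext1 ξ
  obtain ⟨a, b, c, μ, rfl⟩ := exists_eq_cons₃ ξ
  rcases letter_cases hn a with rfl | ⟨ha1, ha2⟩ | rfl <;>
  rcases letter_cases hn b with rfl | ⟨hb1, hb2⟩ | rfl <;>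
  rcases letter_cases hn c with rfl | ⟨hc1, hc2⟩ | rfl <;>
  simp [*]

lemma y1_mul_xj (hj : 1 ≤ (j : ℕ)) (hj' : (j : ℕ) ≤ n - 2) (hxj : IsXMid n hn j xj)
    (hx0 : IsX0 n hn x0) (hxl : IsPrefixMap [last hn] x0 xl) (hy : IsY n hn ycore)
    (hy10 : IsPrefixMap [last hn, first hn] ycore y10)
    (hy110 : IsPrefixMap [last hn, last hn, first hn] ycore y110)
    (hy1 : IsPrefixMap [last hn] ycore y1) :
    y1 * xj = y10 * y110⁻¹ * xl * xj * y1 := by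
  have hy110i := hy110.inv
  have hn₁ : n - 1 ≠ 0 := by omega
  simp only [IsPrefixMap, IsX0, IsY, wcons_cons, wcons_nil] at hx0 hy hy10 hy110i hxl hy1
  ext1 ξ
  obtain ⟨a, b, c, μ, rfl⟩ := exists_eq_cons₃ ξ
  have hjb := hxj.apply_cons_cons hj hj'
  obtain ⟨hlt, -, -, hgt, hl⟩ := hxj
  rcases letter_cases hn a with rfl | ⟨ha1, ha2⟩ | rfl
  · have haj : ((first hn : Fin n) : ℕ) < j := hj
    simp [*]
  · rcases lt_trichotomy (a : ℕ) j with haj | haj | haj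
    · simp [*]
    · obtain rfl : a = j := Fin.ext haj
      obtain hxj | ⟨m, hm1, hm2, hxj | hxj⟩ := hjb b (cons c μ)
      · rcases letter_cases hn c with rfl | ⟨hc1, hc2⟩ | rfl <;> simp [*]
      · simp [*]
      · simp [*]
    · simp [*]
  · simp [*]

set_option maxHeartbeats 1000000 in
lemma y1_mul_xl (hx0 : IsX0 n hn x0) (hxl : IsPrefixMap [last hn] x0 xl)
    (hxll : IsPrefixMap [last hn, last hn] x0 xll) (hy : IsY n hn ycore)
    (hy10 : IsPrefixMap [last hn, first hn] ycore y10)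
    (hy110 : IsPrefixMap [last hn, last hn, first hn] ycore y110)
    (hy1110 : IsPrefixMap [last hn, last hn, last hn, first hn] ycore y1110)
    (hy1 : IsPrefixMap [last hn] ycore y1) :
    y1 * xl = y10 * y110⁻¹ * xl * y110 * y1110⁻¹ * xll * y110 * y10⁻¹ * y1 := by
  have hn₁ : n - 1 ≠ 0 := by omega
  have hy10i := hy10.inv
  have hy110i := hy110.inv
  have hy1110i := hy1110.inv
  have hyi := hy.inv_eqns
  simp only [IsPrefixMap, IsX0, IsY, wcons_cons, wcons_nil]
    at hx0 hy hy10 hy110 hy10i hy110i hy1110i hyi hxll hxl hy1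
  ext1 ξ
  obtain ⟨a, b, c, d, μ, rfl⟩ := exists_eq_cons₄ ξ
  rcases letter_cases hn a with rfl | ⟨ha1, ha2⟩ | rfl <;>
  rcases letter_cases hn b with rfl | ⟨hb1, hb2⟩ | rfl <;>
  rcases letter_cases hn c with rfl | ⟨hc1, hc2⟩ | rfl <;>
  rcases letter_cases hn d with rfl | ⟨hd1, hd2⟩ | rfl <;>
  simp [*]

lemma y1_mul_y100 (hy : IsY n hn ycore) (hy10 : IsPrefixMap [last hn, first hn] ycore y10)
    (hy100 : IsPrefixMap [last hn, first hn, first hn] ycore y100)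
    (hy1 : IsPrefixMap [last hn] ycore y1) :
    y1 * y100 = y10 * y1 := by
  have hn₁ : n - 1 ≠ 0 := by omega
  simp only [IsPrefixMap, IsY, wcons_cons, wcons_nil] at hy hy10 hy100 hy1
  ext1 ξ
  obtain ⟨a, b, c, μ, rfl⟩ := exists_eq_cons₃ ξ
  rcases letter_cases hn a with rfl | ⟨ha1, ha2⟩ | rfl <;>
  rcases letter_cases hn b with rfl | ⟨hb1, hb2⟩ | rfl <;>
  rcases letter_cases hn c with rfl | ⟨hc1, hc2⟩ | rfl <;>
  simp [*]

end Relations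

section AffineNearLast

variable {n : ℕ} (hn : 2 ≤ n)

/-- Identifying `C n` with `[0, 1]` through base-`n` expansion, the homeomorphisms that are affine
near `1 = (n-1)^∞`. -/
def affineNearLast : Subgroup (Γ n) where
  carrier := {g | ∃ k₀ k₁ : ℕ, ∀ η, g ((cons (last hn))^[k₀] η) = (cons (last hn))^[k₁] η}
  one_mem' := ⟨0, 0, fun _ => rfl⟩
  mul_mem' := by
    rintro g h ⟨a₀, a₁, hg⟩ ⟨b₀, b₁, hh⟩
    refine ⟨b₀ + a₀, a₁ + b₁, fun η => ?_⟩
    rw [homeo_mul_apply, Function.iterate_add_apply, hh, ← Function.iterate_add_apply,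
      add_comm, Function.iterate_add_apply, hg, ← Function.iterate_add_apply]
  inv_mem' := by
    rintro g ⟨k₀, k₁, hg⟩
    exact ⟨k₁, k₀, fun η => homeo_inv_apply_of_apply_eq (hg η)⟩

variable {hn} {ycore x0 y1 : Γ n}

lemma IsY.apply_const_first (hy : IsY n hn ycore) :
    ycore (Function.const ℕ (first hn)) = Function.const ℕ (first hn) := by
  refine eq_const_of_eq_cons ?_
  conv_lhs => rw [← cons_const, ← cons_const]
  exact hy.1 _

lemma IsY.apply_iterate_last (hy : IsY n hn ycore) (m : ℕ) :
    ycore ((cons (last hn))^[m] (Function.const ℕ (first hn))) =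
      (cons (last hn))^[2 * m] (Function.const ℕ (first hn)) := by
  induction m with
  | zero => exact hy.apply_const_first
  | succ m ih =>
    rw [Function.iterate_succ_apply', hy.2.2.2.2, ih, Nat.mul_succ,
      Function.iterate_succ_apply', Function.iterate_succ_apply']

lemma IsY.inv_apply_iterate_last (hy : IsY n hn ycore) (m : ℕ) :
    ycore⁻¹ ((cons (last hn))^[2 * m + 1] (Function.const ℕ (first hn))) =
      (cons (last hn))^[m] (cons (first hn) (cons (last hn) (Function.const ℕ (first hn)))) := by
  induction m with
  | zero =>
    conv_lhs => rw [Function.iterate_one, ← cons_const]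
    rw [hy.inv_eqns.2.2.2.1, hy.apply_const_first]
    rfl
  | succ m ih =>
    rw [show 2 * (m + 1) + 1 = 2 * m + 1 + 1 + 1 by ring, Function.iterate_succ_apply',
      Function.iterate_succ_apply', hy.inv_eqns.2.2.2.2, ih, Function.iterate_succ_apply']

lemma IsPrefixMap.apply_iterate_last (hy : IsY n hn ycore)
    (hy1 : IsPrefixMap [last hn] ycore y1) (m : ℕ) :
    y1 ((cons (last hn))^[m + 1] (Function.const ℕ (first hn))) =
      (cons (last hn))^[2 * m + 1] (Function.const ℕ (first hn)) := by
  rw [Function.iterate_succ_apply', hy1.apply_cons, hy.apply_iterate_last,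
    ← Function.iterate_succ_apply' (cons (last hn))]

lemma IsPrefixMap.pow_apply_iterate_last (hy : IsY n hn ycore)
    (hy1 : IsPrefixMap [last hn] ycore y1) (c m : ℕ) :
    (y1 ^ c) ((cons (last hn))^[m + 1] (Function.const ℕ (first hn))) =
      (cons (last hn))^[2 ^ c * m + 1] (Function.const ℕ (first hn)) := by
  induction c generalizing m with
  | zero => simp
  | succ c ih => rw [pow_succ, homeo_mul_apply, hy1.apply_iterate_last hy, ih, pow_succ, mul_assoc]

lemma IsPrefixMap.pow_notMem_affineNearLast (hy : IsY n hn ycore)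
    (hy1 : IsPrefixMap [last hn] ycore y1) {c : ℕ} (hc : 0 < c) :
    y1 ^ c ∉ affineNearLast hn := by
  rintro ⟨k₀, k₁, hk⟩
  have key (i : ℕ) : 2 ^ c * (k₀ + i) = k₁ + i := by
    have := hk ((cons (last hn))^[i + 1] (Function.const ℕ (first hn)))
    rw [← Function.iterate_add_apply, ← Function.iterate_add_apply, ← add_assoc,
      hy1.pow_apply_iterate_last hy, iterate_cons_inj (by simp) (by simp)] at this
    omega
  have h0 := key 0
  have h1 := key 1
  have := Nat.one_lt_two_pow hc.ne'
  rw [mul_add] at h1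
  linarith

lemma IsPrefixMap.conj_x0_notMem_affineNearLast (hx0 : IsX0 n hn x0) (hy : IsY n hn ycore)
    (hy1 : IsPrefixMap [last hn] ycore y1) :
    y1⁻¹ * x0 * y1 ∉ affineNearLast hn := by
  rintro ⟨k₀, k₁, hk⟩
  have h := hk ((cons (last hn))^[1] (Function.const ℕ (first hn)))
  rw [← Function.iterate_add_apply, ← Function.iterate_add_apply, homeo_mul_apply,
    homeo_mul_apply, hy1.apply_iterate_last hy, Function.iterate_succ_apply', hx0.2.2.2,
    hy1.inv.apply_cons, ← Function.iterate_succ_apply' (cons (last hn)),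
    hy.inv_apply_iterate_last, ← Function.iterate_succ_apply' (cons (last hn)),
    iterate_cons_inj (by simp) (by simp)] at h
  exact last_ne_first hn (congrFun h.2 1)

end AffineNearLast

section LodhaMoore

open Subgroup

variable {n : ℕ} {hn : 2 ≤ n} {x : Fin n → Γ n} {ycore y10 y1 : Γ n}

lemma closure_le_affineNearLast (hx : IsXFamily n hn x)
    (hy10 : IsPrefixMap [last hn, first hn] ycore y10) :
    closure (Set.range x ∪ {y10}) ≤ affineNearLast hn := by
  rw [closure_le]
  rintro _ (⟨i, rfl⟩ | rfl)
  · rcases letter_cases hn i with rfl | ⟨h1, h2⟩ | rfl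
    · exact ⟨1, 2, hx.1.2.2.2⟩
    · exact ⟨1, 2, (hx.2.1 i h1 h2).2.2.2.2⟩
    · exact ⟨2, 3, fun η => (hx.2.2.2 _).trans (congrArg _ (hx.1.2.2.2 η))⟩
  · exact ⟨2, 2, fun η => hy10.2 _ (by simp; omega)⟩

lemma map_conj_closure_le (hx : IsXFamily n hn x) (hy : IsY n hn ycore)
    (hy10 : IsPrefixMap [last hn, first hn] ycore y10) (hy1 : IsPrefixMap [last hn] ycore y1) :
    (closure (Set.range x ∪ {y10})).map (MulAut.conj y1).toMonoidHom ≤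
      closure (Set.range x ∪ {y10}) := by
  obtain ⟨hx0, hmid, hxl⟩ := hx
  replace hxl := hxl.isPrefixMap
  have hy110 := hy10.conj (hx0.apply_wcons_last _)
  have hy1110 := hy110.conj (hx0.apply_wcons_last _)
  have hxll := hxl.conj (hx0.apply_wcons_last _)
  have hy100 := hy10.conj (g := (x (last hn))⁻¹) (β := [last hn, first hn, first hn]) fun η =>
    homeo_inv_apply_of_apply_eq
      ((hxl.apply_cons _).trans (congrArg _ (hx0.1 (first hn) (by simp) η)))
  set G₀ := closure (Set.range x ∪ {y10}) with hG₀
  have hxG (i : Fin n) : x i ∈ G₀ := subset_closure (Or.inl ⟨i, rfl⟩)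
  have hy10G : y10 ∈ G₀ := subset_closure (Or.inr rfl)
  have hxlG : y1 * x (last hn) * y1⁻¹ ∈ G₀ := by
    rw [mul_inv_eq_of_eq_mul (y1_mul_xl hx0 hxl hxll hy hy10 hy110 hy1110 hy1)]
    repeat' first | exact hy10G | exact hxG _ | apply mul_mem | apply inv_mem
  rw [hG₀, MonoidHom.map_closure, closure_le, ← hG₀]
  rintro _ ⟨g, (⟨i, rfl⟩ | hg), rfl⟩ <;>
    simp only [MulEquiv.coe_toMonoidHom, MulAut.conj_apply, SetLike.mem_coe]
  · rcases letter_cases hn i with rfl | ⟨h1, h2⟩ | rfl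
    · rw [mul_inv_eq_of_eq_mul (y1_mul_x0 hx0 hxl hy hy10 hy110 hy1)]
      repeat' first | exact hy10G | exact hxG _ | apply mul_mem | apply inv_mem
    · rw [mul_inv_eq_of_eq_mul (y1_mul_xj h1 h2 (hmid i h1 h2) hx0 hxl hy hy10 hy110 hy1)]
      repeat' first | exact hy10G | exact hxG _ | apply mul_mem | apply inv_mem
    · exact hxlG
  · rw [Set.mem_singleton_iff.1 hg,
      conj_eq_of_mul_conj_eq (inv_inv (x (last hn)) ▸ y1_mul_y100 hy hy10 hy100 hy1)]
    exact mul_mem (mul_mem hxlG hy10G) (inv_mem hxlG)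

end LodhaMoore

theorem Gy_HNN_over_G0
    (n : ℕ) (hn : 2 ≤ n) (x : Fin n → Γ n) (hx : IsXFamily n hn x)
    (ycore : Γ n) (hy : IsY n hn ycore)
    (y10 : Γ n) (hy10 : IsPrefixMap [⟨n - 1, by omega⟩, ⟨0, by omega⟩] ycore y10)
    (y1 : Γ n) (hy1 : IsPrefixMap [⟨n - 1, by omega⟩] ycore y1)
    (G0 : Subgroup (Γ n)) (hG0 : G0 = Subgroup.closure (Set.range x ∪ {y10}))
    (Gy : Subgroup (Γ n)) (hGy : Gy = Subgroup.closure (Set.range x ∪ {y10, y1})) :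
    Subgroup.closure ((G0 : Set (Γ n)) ∪ {y1}) = Gy ∧
    G0.map (MulAut.conj (y1)).toMonoidHom < G0 ∧
    ∃ (B : Subgroup ↥G0) (φ : (⊤ : Subgroup ↥G0) ≃* B),
      (∀ a : (⊤ : Subgroup ↥G0),
        ((φ a : ↥G0) : Γ n) = y1 * ((a : ↥G0) : Γ n) * (y1)⁻¹) ∧
      ∃ f : HNNExtension ↥G0 ⊤ B φ →* Γ n,
        (∀ h : ↥G0, f (HNNExtension.of h) = (h : Γ n)) ∧
        f HNNExtension.t = y1 ∧
        Function.Injective f ∧ f.range = Gy := by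
  subst hG0 hGy
  have hG₀ := closure_le_affineNearLast hx hy10
  have hconj := map_conj_closure_le hx hy hy10 hy1
  have hgen : Subgroup.closure ((Subgroup.closure (Set.range x ∪ {y10}) : Set (Γ n)) ∪ {y1}) =
      Subgroup.closure (Set.range x ∪ {y10, y1}) := by
    rw [Subgroup.closure_union, Subgroup.closure_eq, ← Subgroup.closure_union, Set.union_assoc,
      Set.singleton_union]
  refine ⟨hgen, Subgroup.map_conj_lt hconj (Subgroup.subset_closure (Or.inl ⟨first hn, rfl⟩))
    fun h => hy1.conj_x0_notMem_affineNearLast hx.1 hy (hG₀ h), ?_⟩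
  obtain ⟨B, φ, hφ, f, hf_of, hf_t, hf_inj, hf_range⟩ :=
    Subgroup.exists_hnnExtension_hom_injective hconj
      fun c hc h => hy1.pow_notMem_affineNearLast hy hc (hG₀ h)
  exact ⟨B, φ, hφ, f, hf_of, hf_t, hf_inj, hf_range.trans hgen⟩

end LM
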